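/- Let κ be an infinite cardinal. Then: (i) if (X, μ) is a κ-compact GTS and F ⊆ X is μ-closed, then (F, μ|F) is κ-compact, where μ|F = {M ∩ F | M ∈ μ}; (ii) if (X_α, μ_α), α ∈ J, is an indexed family of κ-compact GTS's, then the product GT on ∏_{α∈J} X_α is κ-compact; (iii) if f : (X, μ) → (Y, ν) is a continuous surjection and (X, μ) is κ-compact, then (Y, ν) is κ-compact. -/
import Mathlib


universe u

/-- A generalized topology on `X`: contains `∅` and is closed under arbitrary unions. -/
def IsGT {X : Type u} (μ : Set (Set X)) : Prop :=
  ∅ ∈ μ ∧ ∀ S : Set (Set X), S ⊆ μ → ⋃₀ S ∈ μ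

/-- `f` is `(μ, ν)`-continuous: preimages of `ν`-open sets are `μ`-open. -/
def GCont {X Y : Type u} (μ : Set (Set X)) (ν : Set (Set Y)) (f : X → Y) : Prop :=
  ∀ N ∈ ν, f ⁻¹' N ∈ μ

/-- The GTS `(X, μ)` is `κ`-compact: every `μ`-open cover of `X` has a subcover
of cardinality less than `κ`. -/
def KCompact {X : Type u} (κ : Cardinal.{u}) (μ : Set (Set X)) : Prop :=
  ∀ S : Set (Set X), S ⊆ μ → ⋃₀ S = Set.univ →
    ∃ T ⊆ S, ⋃₀ T = Set.univ ∧ Cardinal.mk T < κ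

/-- The product generalized topology on `∀ α, X α`. -/
def prodGT {J : Type u} {Xa : J → Type u} (μa : ∀ α, Set (Set (Xa α))) :
    Set (Set (∀ α, Xa α)) :=
  {U | ∃ M : ∀ α, Set (Xa α), (∀ α, M α ∈ μa α) ∧ U = ⋃ α, (fun x => x α) ⁻¹' M α}

theorem stmt17 (κ : Cardinal.{u}) (hκ : Cardinal.aleph0 ≤ κ) :
    (∀ (X : Type u) (μ : Set (Set X)), IsGT μ → KCompact κ μ →
      ∀ F : Set X, Fᶜ ∈ μ →
        KCompact κ {A : Set ↥F | ∃ M ∈ μ, A = ((↑) : ↥F → X) ⁻¹' M}) ∧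
    (∀ (J : Type u) (Xa : J → Type u) (μa : ∀ α, Set (Set (Xa α))),
      (∀ α, IsGT (μa α)) → (∀ α, KCompact κ (μa α)) →
        KCompact κ (prodGT μa)) ∧
    (∀ (X Y : Type u) (μ : Set (Set X)) (ν : Set (Set Y)), IsGT μ → IsGT ν →
      ∀ f : X → Y, GCont μ ν f → Function.Surjective f →
        KCompact κ μ → KCompact κ ν) := by
  refine ⟨?_, ?_, ?_⟩
  · -- (i) closed subspace
    intro X μ hμ hcomp F hFc S hS hScov
    choose! M hMμ hMA using fun A (hA : A ∈ S) => hS hA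
    set S' : Set (Set X) := (M '' S) ∪ {Fᶜ} with hS'
    have hS'μ : S' ⊆ μ := by
      rintro B (⟨A, hA, rfl⟩ | hB)
      · exact hMμ A hA
      · simpa [Set.mem_singleton_iff.mp hB]
    have hS'cov : ⋃₀ S' = Set.univ := by
      ext x
      simp only [Set.mem_univ, iff_true, Set.mem_sUnion]
      by_cases hx : x ∈ F
      · have : (⟨x, hx⟩ : ↥F) ∈ ⋃₀ S := hScov ▸ Set.mem_univ _
        obtain ⟨A, hA, hxA⟩ := this
        refine ⟨M A, Or.inl ⟨A, hA, rfl⟩, ?_⟩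
        have := hMA A hA
        rw [this] at hxA
        exact hxA
      · exact ⟨Fᶜ, Or.inr rfl, hx⟩
    obtain ⟨T', hT'S', hT'cov, hT'card⟩ := hcomp S' hS'μ hS'cov
    choose! g hgS hgM using fun B (hB : B ∈ M '' S) => hB
    refine ⟨g '' (T' ∩ (M '' S)), ?_, ?_, ?_⟩
    · rintro A ⟨B, ⟨hBT, hBM⟩, rfl⟩
      exact hgS B hBM
    · ext x
      simp only [Set.mem_univ, iff_true, Set.mem_sUnion]
      have : (x : X) ∈ ⋃₀ T' := hT'cov ▸ Set.mem_univ _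
      obtain ⟨B, hBT, hxB⟩ := this
      have hBS' := hT'S' hBT
      rcases hBS' with hBM | hBc
      · refine ⟨g B, ⟨B, ⟨hBT, hBM⟩, rfl⟩, ?_⟩
        have h1 : g B = ((↑) : ↥F → X) ⁻¹' (M (g B)) := hMA (g B) (hgS B hBM)
        rw [h1, hgM B hBM]
        exact hxB
      · exact absurd hxB (by simp [Set.mem_singleton_iff.mp hBc, x.2])
    · calc Cardinal.mk (g '' (T' ∩ (M '' S))) ≤ Cardinal.mk ↥(T' ∩ (M '' S)) :=
            Cardinal.mk_image_le
        _ ≤ Cardinal.mk T' := Cardinal.mk_le_mk_of_subset Set.inter_subset_left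
        _ < κ := hT'card
  · -- (ii) products
    intro J Xa μa hGT hcomp S hS hcov
    choose! M hMμ hMU using fun U (hU : U ∈ S) => hS hU
    by_cases h : ∃ α, ⋃₀ ((fun U => M U α) '' S) = Set.univ
    · obtain ⟨α, hα⟩ := h
      have hsub : (fun U => M U α) '' S ⊆ μa α := by
        rintro B ⟨U, hU, rfl⟩; exact hMμ U hU α
      obtain ⟨Tα, hTα, hTαcov, hTαcard⟩ := hcomp α _ hsub hα
      choose! g hgS hgM using fun B (hB : B ∈ (fun U => M U α) '' S) => hB
      refine ⟨g '' Tα, ?_, ?_, ?_⟩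
      · rintro U ⟨B, hB, rfl⟩; exact hgS B (hTα hB)
      · ext x
        simp only [Set.mem_univ, iff_true, Set.mem_sUnion]
        have : x α ∈ ⋃₀ Tα := hTαcov ▸ Set.mem_univ _
        obtain ⟨B, hBT, hxB⟩ := this
        refine ⟨g B, ⟨B, hBT, rfl⟩, ?_⟩
        have hU := hMU (g B) (hgS B (hTα hBT))
        rw [hU]
        have heq : M (g B) α = B := hgM B (hTα hBT)
        exact Set.mem_iUnion.mpr ⟨α, show x α ∈ M (g B) α from heq.symm ▸ hxB⟩
      · exact lt_of_le_of_lt Cardinal.mk_image_le hTαcard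
    · push_neg at h
      exfalso
      have hx : ∀ α, ∃ a, a ∉ ⋃₀ ((fun U => M U α) '' S) := fun α =>
        (Set.ne_univ_iff_exists_notMem _).mp (h α)
      choose x hxn using hx
      have : x ∈ ⋃₀ S := hcov ▸ Set.mem_univ _
      obtain ⟨U, hU, hxU⟩ := this
      rw [hMU U hU] at hxU
      obtain ⟨α, hα⟩ := Set.mem_iUnion.mp hxU
      exact hxn α ⟨M U α, ⟨U, hU, rfl⟩, hα⟩
  · -- (iii) continuous surjective image
    intro X Y μ ν hμ hν f hf hsurj hcomp S hS hcov
    have hsub : (Set.preimage f) '' S ⊆ μ := by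
      rintro B ⟨N, hN, rfl⟩; exact hf N (hS hN)
    have hcov' : ⋃₀ ((Set.preimage f) '' S) = Set.univ := by
      ext x
      simp only [Set.mem_univ, iff_true, Set.mem_sUnion]
      have : f x ∈ ⋃₀ S := hcov ▸ Set.mem_univ _
      obtain ⟨N, hN, hxN⟩ := this
      exact ⟨f ⁻¹' N, ⟨N, hN, rfl⟩, hxN⟩
    obtain ⟨T', hT'S, hT'cov, hT'card⟩ := hcomp _ hsub hcov'
    choose! g hgS hgM using fun B (hB : B ∈ (Set.preimage f) '' S) => hB
    refine ⟨g '' T', ?_, ?_, ?_⟩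
    · rintro N ⟨B, hB, rfl⟩; exact hgS B (hT'S hB)
    · ext y
      simp only [Set.mem_univ, iff_true, Set.mem_sUnion]
      obtain ⟨x, rfl⟩ := hsurj y
      have : x ∈ ⋃₀ T' := hT'cov ▸ Set.mem_univ _
      obtain ⟨B, hBT, hxB⟩ := this
      refine ⟨g B, ⟨B, hBT, rfl⟩, ?_⟩
      have := hgM B (hT'S hBT)
      rw [← this] at hxB
      exact hxB
    · exact lt_of_le_of_lt Cardinal.mk_image_le hT'card
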